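/- arXiv:0707.3950 — 6 statements merged into one kernel-verified Lean document; each statement's English description precedes it below -/
import Mathlib

section
/- For every positive integer n ≥ 1 there exists a number c_n with 0 < c_n < 1 such that H_n = (1/2)·ln(2m) + γ + c_n/(12m), where m := n(n+1)/2. -/
open Real Filter Topology

/-!
Let `E n = H n - log (n (n + 1)) / 2 - γ` (`cesaroError n`). With `x = 1 / (n + 1)` one has
`E n - E (n + 1) = (log (1 + x) - log (1 - x)) / 2 - x`, and the power series
`log (1 + x) - log (1 - x) = 2 ∑ x ^ (2k + 1) / (2k + 1)` puts this difference strictly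
between `0` and `x ^ 3 / (3 (1 - x ^ 2)) = 1 / (6 n (n + 1)) - 1 / (6 (n + 1) (n + 2))`.
As `E n → 0`, both `E n` and `1 / (6 n (n + 1)) - E n` decrease strictly to `0`, hence are
positive, so `c = 6 n (n + 1) E n = 12 m E n` lies in `(0, 1)`.
-/

namespace Real

theorem hasSum_log_sub_log_sub_two_mul_of_abs_lt_one {x : ℝ} (h : |x| < 1) :
    HasSum (fun k : ℕ => 2 / (2 * k + 3) * x ^ (2 * k + 3))
      (log (1 + x) - log (1 - x) - 2 * x) := by
  have hsum := (hasSum_nat_add_iff' 1).mpr (hasSum_log_sub_log_of_abs_lt_one h)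
  norm_num at hsum
  exact hsum.congr_fun fun k => by ring

theorem two_mul_lt_log_sub_log_of_pos_of_lt_one {x : ℝ} (hx₀ : 0 < x) (hx₁ : x < 1) :
    2 * x < log (1 + x) - log (1 - x) := by
  have htail := hasSum_log_sub_log_sub_two_mul_of_abs_lt_one (abs_lt.mpr ⟨by linarith, hx₁⟩)
  have := hasSum_lt (i := 0) (fun k => by positivity) (by positivity) hasSum_zero htail
  linarith

theorem log_sub_log_lt_of_pos_of_lt_one {x : ℝ} (hx₀ : 0 < x) (hx₁ : x < 1) :
    log (1 + x) - log (1 - x) < 2 * x + 2 / 3 * x ^ 3 / (1 - x ^ 2) := by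
  have hx2 : x ^ 2 < 1 := by nlinarith
  have htail := hasSum_log_sub_log_sub_two_mul_of_abs_lt_one (abs_lt.mpr ⟨by linarith, hx₁⟩)
  have hgeom := (hasSum_geometric_of_lt_one (by positivity) hx2).mul_left (2 / 3 * x ^ 3)
  have hle : ∀ k : ℕ, 2 / (2 * k + 3) * x ^ (2 * k + 3) ≤ 2 / 3 * x ^ 3 * (x ^ 2) ^ k := by
    intro k
    rw [← pow_mul, mul_assoc, ← pow_add, add_comm 3]
    gcongr
    linarith [k.cast_nonneg (α := ℝ)]
  have hlt := hasSum_lt (i := 1) hle (by norm_num; nlinarith [pow_pos hx₀ 5]) htail hgeom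
  rw [← div_eq_mul_inv] at hlt
  linarith

end Real

theorem lt_of_tendsto_of_succ_lt {α : Type*} [Preorder α] [TopologicalSpace α]
    [OrderClosedTopology α] {u : ℕ → α} {a : α} {n : ℕ} (hu : Tendsto u atTop (𝓝 a))
    (h : ∀ k, n ≤ k → u (k + 1) < u k) : a < u n := by
  have hanti : StrictAnti fun k => u (k + n) :=
    strictAnti_nat_of_succ_lt fun k => by simpa only [add_right_comm] using h (k + n) (by omega)
  simpa using (hanti.antitone.le_of_tendsto (hu.comp (tendsto_add_atTop_nat n)) 1).trans_lt
    (hanti zero_lt_one)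

noncomputable def cesaroError (n : ℕ) : ℝ :=
  harmonic n - 1 / 2 * log (n * (n + 1)) - eulerMascheroniConstant

theorem cesaroError_eq_average {n : ℕ} (hn : n ≠ 0) :
    cesaroError n =
      (eulerMascheroniSeq n + eulerMascheroniSeq' n) / 2 - eulerMascheroniConstant := by
  have hn' : (n : ℝ) ≠ 0 := Nat.cast_ne_zero.mpr hn
  rw [cesaroError, eulerMascheroniSeq, eulerMascheroniSeq', if_neg hn,
    log_mul hn' (by positivity)]
  ring

theorem tendsto_cesaroError : Tendsto cesaroError atTop (𝓝 0) := by
  have h := (tendsto_eulerMascheroniSeq.add tendsto_eulerMascheroniSeq').div_const 2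
    |>.sub_const eulerMascheroniConstant
  rw [add_self_div_two, sub_self] at h
  exact h.congr' <| (eventually_ne_atTop 0).mono fun n hn => (cesaroError_eq_average hn).symm

theorem cesaroError_sub_succ {n : ℕ} (hn : n ≠ 0) :
    cesaroError n - cesaroError (n + 1) =
      (log (1 + (n + 1 : ℝ)⁻¹) - log (1 - (n + 1 : ℝ)⁻¹)) / 2 - (n + 1 : ℝ)⁻¹ := by
  have hn' : (n : ℝ) ≠ 0 := Nat.cast_ne_zero.mpr hn
  have hplus : 1 + (n + 1 : ℝ)⁻¹ = (n + 2) / (n + 1) := by field_simp; ring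
  have hminus : 1 - (n + 1 : ℝ)⁻¹ = n / (n + 1) := by field_simp; ring
  rw [hplus, hminus, log_div (by positivity) (by positivity), log_div hn' (by positivity),
    cesaroError, cesaroError, harmonic_succ, log_mul hn' (by positivity),
    log_mul (by positivity) (by positivity)]
  push_cast
  ring_nf

theorem cesaroError_succ_lt {n : ℕ} (hn : n ≠ 0) : cesaroError (n + 1) < cesaroError n := by
  have hn' : (0 : ℝ) < n := Nat.cast_pos.mpr (Nat.pos_of_ne_zero hn)
  have h := two_mul_lt_log_sub_log_of_pos_of_lt_one (x := (n + 1 : ℝ)⁻¹) (by positivity)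
    (inv_lt_one_of_one_lt₀ (by linarith))
  linarith [cesaroError_sub_succ hn]

theorem cesaroError_sub_succ_lt {n : ℕ} (hn : n ≠ 0) :
    cesaroError n - cesaroError (n + 1) <
      (6 * n * (n + 1) : ℝ)⁻¹ - (6 * (n + 1) * (n + 2) : ℝ)⁻¹ := by
  have hn' : (0 : ℝ) < n := Nat.cast_pos.mpr (Nat.pos_of_ne_zero hn)
  have h := log_sub_log_lt_of_pos_of_lt_one (x := (n + 1 : ℝ)⁻¹) (by positivity)
    (inv_lt_one_of_one_lt₀ (by linarith))
  have hcubic : 2 / 3 * (n + 1 : ℝ)⁻¹ ^ 3 / (1 - (n + 1 : ℝ)⁻¹ ^ 2) =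
      2 * ((6 * n * (n + 1) : ℝ)⁻¹ - (6 * (n + 1) * (n + 2) : ℝ)⁻¹) := by
    rw [show 1 - (n + 1 : ℝ)⁻¹ ^ 2 = n * (n + 2) / (n + 1) ^ 2 by field_simp; ring]
    field_simp
    ring
  linarith [cesaroError_sub_succ hn]

theorem tendsto_inv_six_mul_mul_succ :
    Tendsto (fun n : ℕ => (6 * n * (n + 1) : ℝ)⁻¹) atTop (𝓝 0) := by
  have h : Tendsto (fun n : ℕ => (n : ℝ)) atTop atTop := tendsto_natCast_atTop_atTop
  exact tendsto_inv_atTop_zero.comp <|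
    (h.const_mul_atTop (by norm_num)).atTop_mul_atTop₀ (tendsto_atTop_add_const_right _ 1 h)

theorem cesaroError_pos {n : ℕ} (hn : n ≠ 0) : 0 < cesaroError n :=
  lt_of_tendsto_of_succ_lt tendsto_cesaroError fun _ hk => cesaroError_succ_lt (by omega)

theorem cesaroError_lt {n : ℕ} (hn : n ≠ 0) : cesaroError n < (6 * n * (n + 1) : ℝ)⁻¹ := by
  have h := tendsto_inv_six_mul_mul_succ.sub tendsto_cesaroError
  rw [sub_zero] at h
  refine sub_pos.mp <| lt_of_tendsto_of_succ_lt h fun k hk => ?_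
  have := cesaroError_sub_succ_lt (n := k) (by omega)
  push_cast
  rw [add_assoc, one_add_one_eq_two]
  linarith

theorem cesaro_approximation (n : ℕ) (hn : 1 ≤ n) :
    ∃ c : ℝ, 0 < c ∧ c < 1 ∧
      (harmonic n : ℝ) =
        (1 / 2) * Real.log (2 * ((n * (n + 1) : ℝ) / 2)) + Real.eulerMascheroniConstant +
          c / (12 * ((n * (n + 1) : ℝ) / 2)) := by
  have hn0 : n ≠ 0 := Nat.one_le_iff_ne_zero.mp hn
  have hA : (0 : ℝ) < 6 * n * (n + 1) := by positivity
  refine ⟨6 * n * (n + 1) * cesaroError n, mul_pos hA (cesaroError_pos hn0), ?_, ?_⟩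
  · have := mul_lt_mul_of_pos_left (cesaroError_lt hn0) hA
    rwa [mul_inv_cancel₀ hA.ne'] at this
  · rw [show 2 * ((n * (n + 1) : ℝ) / 2) = n * (n + 1) by ring,
      show 12 * ((n * (n + 1) : ℝ) / 2) = 6 * n * (n + 1) by ring,
      mul_div_cancel_left₀ _ hA.ne', cesaroError]
    ring
end

section
/- For every natural number n ≥ 1, the inequality 1/(2n + 1/(1−γ) − 2) ≤ H_n − ln n − γ < 1/(2n + 1/3) holds, with equality on the left only for n = 1. -/
/-!
Write `d n = H_n - log n - γ` and `f_c n = 1 / (2 n + c)`; both tend to `0`. Hence `d n < f_c n`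
for `n ≥ N` as soon as `d k - d (k + 1) < f_c k - f_c (k + 1)` for all `k ≥ N`, since then
`f_c - d` decreases strictly to `0` from `N` on; the lower bound is the same argument with the
roles exchanged. Here `d k - d (k + 1) = log (1 + 1/k) - 1/(k + 1)`, and the series
`log (1 + 1/x) = ∑ 2/(2j + 1) (2x + 1)^-(2j + 1)` gives it to the needed precision: two terms plus
a geometric tail bound for `c = 1/3`, `k ≥ 1`, and three terms for `c ≥ 4/11`, `k ≥ 2`. After
clearing denominators and shifting `x` to the start of its range, each comparison is a polynomial
with positive coefficients. The upper bound at `n = 4` gives `γ > 15/26`, which is exactly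
`1/(1 - γ) - 2 > 4/11`; at `n = 1` both sides of the lower bound equal `1 - γ`.
-/

open Real Filter Topology

lemma lt_of_tendsto_of_sub_succ_lt {α : Type*} [AddCommGroup α] [LinearOrder α]
    [IsOrderedAddMonoid α] [TopologicalSpace α] [OrderClosedTopology α]
    [IsTopologicalAddGroup α] {u v : ℕ → α} {a : α} {N n : ℕ}
    (hu : Tendsto u atTop (𝓝 a)) (hv : Tendsto v atTop (𝓝 a))
    (h : ∀ k ≥ N, u k - u (k + 1) < v k - v (k + 1)) (hn : N ≤ n) : u n < v n := by
  set w : ℕ → α := fun k ↦ v (k + N) - u (k + N)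
  have hw : StrictAnti w := strictAnti_nat_of_succ_lt fun k ↦ by
    have := h (k + N) (Nat.le_add_left N k)
    rw [sub_lt_sub_iff, add_comm] at this
    simpa only [w, add_right_comm k 1 N, sub_lt_sub_iff] using this
  have hw0 : Tendsto w atTop (𝓝 0) := by
    rw [← sub_self a]
    exact (hv.sub hu).comp (tendsto_add_atTop_nat N)
  have := (hw (Nat.lt_succ_self (n - N))).trans_le' (hw.antitone.le_of_tendsto hw0 _)
  rw [← sub_pos]
  simpa [w, Nat.sub_add_cancel hn] using this

lemma sum_range_le_log_one_add_inv {a : ℝ} (ha : 0 < a) (K : ℕ) :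
    ∑ k ∈ Finset.range K, 2 * (1 / (2 * k + 1)) * (1 / (2 * a + 1)) ^ (2 * k + 1) ≤
      log (1 + a⁻¹) :=
  sum_le_hasSum _ (fun _ _ ↦ by positivity) (hasSum_log_one_add_inv ha)

lemma log_one_add_inv_le_sum_range_add {a : ℝ} (ha : 0 < a) (K : ℕ) :
    log (1 + a⁻¹) ≤
      ∑ k ∈ Finset.range K, 2 * (1 / (2 * k + 1)) * (1 / (2 * a + 1)) ^ (2 * k + 1) +
        2 / (2 * K + 1) * (1 / (2 * a + 1)) ^ (2 * K + 1) / (1 - (1 / (2 * a + 1)) ^ 2) := by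
  set t : ℝ := 1 / (2 * a + 1)
  have ht0 : 0 ≤ t := by positivity
  have ht1 : t ^ 2 < 1 := pow_lt_one₀ ht0 ((div_lt_one (by linarith)).2 (by linarith)) two_ne_zero
  have htail := (hasSum_nat_add_iff' K).2 (hasSum_log_one_add_inv ha)
  have hgeom := (hasSum_geometric_of_lt_one (sq_nonneg t) ht1).mul_left
    (2 / (2 * K + 1) * t ^ (2 * K + 1))
  have := hasSum_le (fun k ↦ ?_) htail hgeom
  · rw [← div_eq_mul_inv] at this
    linarith
  calc 2 * (1 / (2 * ((k + K : ℕ) : ℝ) + 1)) * t ^ (2 * (k + K) + 1)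
      = 2 / (2 * ((k + K : ℕ) : ℝ) + 1) * t ^ (2 * K + 1) * (t ^ 2) ^ k := by ring
    _ ≤ 2 / (2 * K + 1) * t ^ (2 * K + 1) * (t ^ 2) ^ k := by gcongr; linarith

lemma eulerMascheroniSeq'_sub_succ {k : ℕ} (hk : k ≠ 0) :
    eulerMascheroniSeq' k - eulerMascheroniSeq' (k + 1) =
      log (1 + (k : ℝ)⁻¹) - 1 / (k + 1) := by
  have hk' : (k : ℝ) ≠ 0 := Nat.cast_ne_zero.2 hk
  rw [show 1 + (k : ℝ)⁻¹ = (k + 1) / k by field_simp, log_div (by positivity) hk',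
    eulerMascheroniSeq', eulerMascheroniSeq', if_neg hk, if_neg k.succ_ne_zero, harmonic_succ]
  push_cast
  ring

lemma log_one_add_inv_sub_lt {x : ℝ} (hx : 1 ≤ x) :
    log (1 + x⁻¹) - 1 / (x + 1) < 1 / (2 * x + 1 / 3) - 1 / (2 * (x + 1) + 1 / 3) := by
  have hx0 : 0 < x := zero_lt_one.trans_le hx
  have hlog : log (1 + x⁻¹) ≤
      2 / (2 * x + 1) + 2 / (3 * (2 * x + 1) ^ 3) + 1 / (10 * x * (x + 1) * (2 * x + 1) ^ 3) := by
    convert log_one_add_inv_le_sum_range_add hx0 2 using 1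
    have hu : 2 * x + 1 ≠ 0 := by positivity
    rw [show 1 - (1 / (2 * x + 1)) ^ 2 = 4 * x * (x + 1) / (2 * x + 1) ^ 2 by field_simp; ring]
    norm_num [Finset.sum_range_succ]
    field_simp
    ring
  obtain ⟨y, hy, rfl⟩ : ∃ y, 0 ≤ y ∧ x = 1 + y := ⟨x - 1, by linarith, by ring⟩
  have hgap : 0 < 1 / (2 * (1 + y) + 1 / 3) - 1 / (2 * (1 + y + 1) + 1 / 3) -
      (2 / (2 * (1 + y) + 1) + 2 / (3 * (2 * (1 + y) + 1) ^ 3) +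
        1 / (10 * (1 + y) * (1 + y + 1) * (2 * (1 + y) + 1) ^ 3) - 1 / (1 + y + 1)) := by
    convert (by positivity : (0 : ℝ) < (677 + 1710 * y + 1372 * y ^ 2 + 360 * y ^ 3) /
      (30 * (1 + y) * (2 + y) * (2 * (1 + y) + 1) ^ 3 * (6 * y + 7) * (6 * y + 13))) using 1
    field_simp
    ring
  linarith

lemma one_div_sub_one_div_add_two_le {p q : ℝ} (hp : 0 < p) (hpq : p ≤ q) :
    1 / q - 1 / (q + 2) ≤ 1 / p - 1 / (p + 2) := by
  have e : ∀ r : ℝ, 0 < r → 1 / r - 1 / (r + 2) = 2 / (r * (r + 2)) := fun r hr ↦ by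
    field_simp; ring
  rw [e p hp, e q (hp.trans_le hpq)]
  gcongr
  linarith

lemma lt_log_one_add_inv_sub {x c : ℝ} (hx : 2 ≤ x) (hc : 4 / 11 ≤ c) :
    1 / (2 * x + c) - 1 / (2 * (x + 1) + c) < log (1 + x⁻¹) - 1 / (x + 1) := by
  have hx0 : 0 < x := two_pos.trans_le hx
  have hlog : 2 / (2 * x + 1) + 2 / (3 * (2 * x + 1) ^ 3) + 2 / (5 * (2 * x + 1) ^ 5) ≤
      log (1 + x⁻¹) := by
    convert sum_range_le_log_one_add_inv hx0 3 using 1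
    norm_num [Finset.sum_range_succ]
    field_simp
  have hmono : 1 / (2 * x + c) - 1 / (2 * (x + 1) + c) ≤
      1 / (2 * x + 4 / 11) - 1 / (2 * (x + 1) + 4 / 11) := by
    rw [show 2 * (x + 1) + c = 2 * x + c + 2 by ring,
      show 2 * (x + 1) + 4 / 11 = 2 * x + 4 / 11 + 2 by ring]
    exact one_div_sub_one_div_add_two_le (by positivity) (by linarith)
  obtain ⟨y, hy, rfl⟩ : ∃ y, 0 ≤ y ∧ x = 2 + y := ⟨x - 2, by linarith, by ring⟩
  have hgap : 0 < 2 / (2 * (2 + y) + 1) + 2 / (3 * (2 * (2 + y) + 1) ^ 3) +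
      2 / (5 * (2 * (2 + y) + 1) ^ 5) - 1 / (2 + y + 1) -
      (1 / (2 * (2 + y) + 4 / 11) - 1 / (2 * (2 + y + 1) + 4 / 11)) := by
    convert (by positivity : (0 : ℝ) <
      (24615 + 100569 * y + 124544 * y ^ 2 + 68712 * y ^ 3 + 17760 * y ^ 4 + 1760 * y ^ 5) /
        (30 * (3 + y) * (2 * (2 + y) + 1) ^ 5 * (11 * y + 24) * (11 * y + 35))) using 1
    field_simp
    ring
  linarith

lemma tendsto_one_div_two_mul_add_atTop (c : ℝ) :
    Tendsto (fun n : ℕ ↦ 1 / (2 * (n : ℝ) + c)) atTop (𝓝 0) := by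
  simp only [one_div]
  exact tendsto_inv_atTop_zero.comp <|
    tendsto_atTop_add_const_right _ c (tendsto_natCast_atTop_atTop.const_mul_atTop two_pos)

lemma tendsto_eulerMascheroniConstant_add_one_div (c : ℝ) :
    Tendsto (fun n : ℕ ↦ eulerMascheroniConstant + 1 / (2 * (n : ℝ) + c)) atTop
      (𝓝 eulerMascheroniConstant) := by
  simpa using (tendsto_one_div_two_mul_add_atTop c).const_add eulerMascheroniConstant

lemma eulerMascheroniSeq'_lt {n : ℕ} (hn : n ≠ 0) :
    eulerMascheroniSeq' n < eulerMascheroniConstant + 1 / (2 * n + 1 / 3) := by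
  refine lt_of_tendsto_of_sub_succ_lt tendsto_eulerMascheroniSeq'
    (tendsto_eulerMascheroniConstant_add_one_div _) (fun k hk ↦ ?_) (Nat.one_le_iff_ne_zero.2 hn)
  rw [eulerMascheroniSeq'_sub_succ (by omega), add_sub_add_left_eq_sub, Nat.cast_succ]
  exact log_one_add_inv_sub_lt (by exact_mod_cast hk)

lemma eulerMascheroniConstant_add_lt_eulerMascheroniSeq' {c : ℝ} (hc : 4 / 11 ≤ c) {n : ℕ}
    (hn : 2 ≤ n) : eulerMascheroniConstant + 1 / (2 * n + c) < eulerMascheroniSeq' n := by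
  refine lt_of_tendsto_of_sub_succ_lt (tendsto_eulerMascheroniConstant_add_one_div _)
    tendsto_eulerMascheroniSeq' (fun k hk ↦ ?_) hn
  rw [eulerMascheroniSeq'_sub_succ (by omega), add_sub_add_left_eq_sub, Nat.cast_succ]
  exact lt_log_one_add_inv_sub (by exact_mod_cast hk) hc

lemma fifteen_div_twentySix_lt_eulerMascheroniConstant : 15 / 26 < eulerMascheroniConstant := by
  have h := eulerMascheroniSeq'_lt (n := 4) (by norm_num)
  have h4 : eulerMascheroniSeq' 4 = 25 / 12 - 2 * log 2 := by
    have hH : harmonic 4 = 25 / 12 := by norm_num [harmonic, Finset.sum_range_succ]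
    rw [eulerMascheroniSeq', if_neg four_ne_zero, hH, Nat.cast_ofNat,
      show (4 : ℝ) = 2 ^ 2 by norm_num, log_pow]
    push_cast
    ring
  linarith [log_two_lt_d9]

theorem toth_mare_sharp (n : ℕ) (hn : 1 ≤ n) :
    (1 / (2 * n + 1 / (1 - Real.eulerMascheroniConstant) - 2) ≤
        (harmonic n : ℝ) - Real.log n - Real.eulerMascheroniConstant ∧
      (harmonic n : ℝ) - Real.log n - Real.eulerMascheroniConstant <
        1 / (2 * n + 1 / 3)) ∧
    (1 / (2 * n + 1 / (1 - Real.eulerMascheroniConstant) - 2) =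
        (harmonic n : ℝ) - Real.log n - Real.eulerMascheroniConstant ↔ n = 1) := by
  have hseq : eulerMascheroniSeq' n = harmonic n - log n := by
    simp [eulerMascheroniSeq', Nat.one_le_iff_ne_zero.1 hn]
  have hup := eulerMascheroniSeq'_lt (Nat.one_le_iff_ne_zero.1 hn)
  rw [hseq] at hup
  rcases hn.eq_or_lt with rfl | h2
  · have heq : 1 / (2 * ((1 : ℕ) : ℝ) + 1 / (1 - eulerMascheroniConstant) - 2) =
        (harmonic 1 : ℝ) - log (1 : ℕ) - eulerMascheroniConstant := by
      simp
    exact ⟨⟨heq.le, sub_lt_iff_lt_add'.2 hup⟩, iff_of_true heq rfl⟩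
  · have hc : 4 / 11 ≤ 1 / (1 - eulerMascheroniConstant) - 2 := by
      have hγ := fifteen_div_twentySix_lt_eulerMascheroniConstant
      have hγ1 : 0 < 1 - eulerMascheroniConstant := by
        linarith [eulerMascheroniConstant_lt_two_thirds]
      rw [le_sub_iff_add_le, le_div_iff₀ hγ1]
      linarith
    have hlo := eulerMascheroniConstant_add_lt_eulerMascheroniSeq' hc h2
    rw [← add_sub_assoc, hseq] at hlo
    exact ⟨⟨by linarith, sub_lt_iff_lt_add'.2 hup⟩, iff_of_false (by linarith) h2.ne'⟩
end

section
/- For every natural number n ≥ 1, the inequality 1/(6n(n+1) + 6/5) < H_n − ln(√(n(n+1))) − γ ≤ 1/(6n(n+1) + 1/(1 − γ − ln√2) − 12) holds, with equality on the right only for n = 1. -/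
/-!
Write `d n = H_n - log √(n(n+1)) - γ` and `r_a n = 1 / (6n(n+1) + a)`. With `x = 1/(k+1)`,
`d k - d (k+1) = artanh x - x` and `r_a k - r_a (k+1) = x³ / (3((1 + a x²/6)² - x²))`.
Truncating `artanh x = ∑ x^(2j+1)/(2j+1)` shows that the increments of `d` dominate those of
`r_{6/5}` for `k ≥ 1` (strictly) and are dominated by those of `r_{23/20}` for `k ≥ 2`; as all these
sequences tend to `0`, the comparison of increments telescopes to `r_{6/5} n < d n` and
`d n ≤ r_{23/20} n`. The same series estimates `d 1` well enough to give `1/d 1 - 12 < 23/20`,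
so the upper bound `r_{1/d 1 - 12} n` is strict for `n ≥ 2`, and it is an identity at `n = 1`.
-/

open Real Filter Topology Finset

theorem Real.hasSum_artanh {x : ℝ} (h : |x| < 1) :
    HasSum (fun k : ℕ => x ^ (2 * k + 1) / (2 * k + 1)) (artanh x) := by
  have hx := abs_lt.1 h
  rw [artanh_eq_half_log ⟨hx.1.le, hx.2.le⟩, log_div (by linarith) (by linarith)]
  refine ((hasSum_log_sub_log_of_abs_lt_one h).mul_left (1 / 2)).congr_fun fun k => ?_
  ring

theorem Real.sum_range_le_artanh {x : ℝ} (h0 : 0 ≤ x) (h1 : x < 1) (K : ℕ) :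
    ∑ k ∈ range K, x ^ (2 * k + 1) / (2 * k + 1) ≤ artanh x :=
  sum_le_hasSum _ (fun _ _ => by positivity) (hasSum_artanh (abs_lt.2 ⟨by linarith, h1⟩))

theorem Real.artanh_le_sum_range_add {x : ℝ} (h0 : 0 ≤ x) (h1 : x < 1) (K : ℕ) :
    artanh x ≤ ∑ k ∈ range K, x ^ (2 * k + 1) / (2 * k + 1) +
      x ^ (2 * K + 1) / (2 * K + 1) / (1 - x ^ 2) := by
  have hs := (hasSum_nat_add_iff' K).2 (hasSum_artanh (abs_lt.2 ⟨by linarith, h1⟩))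
  have hgeom := (hasSum_geometric_of_lt_one (sq_nonneg x) (by nlinarith)).mul_left
    (x ^ (2 * K + 1) / (2 * K + 1))
  have htail := hasSum_le (fun k => ?_) hs hgeom
  · rw [← div_eq_mul_inv] at htail
    linarith
  · rw [← pow_mul, div_mul_eq_mul_div, ← pow_add, show 2 * K + 1 + 2 * k = 2 * (k + K) + 1 by ring]
    push_cast
    gcongr
    linarith

theorem Real.lt_artanh_sub_self {x : ℝ} (h0 : 0 < x) (h1 : x ≤ 1 / 2) :
    x ^ 3 / (3 * ((1 + x ^ 2 / 5) ^ 2 - x ^ 2)) < artanh x - x := by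
  have hs := sum_range_le_artanh h0.le (by linarith) 4
  norm_num [sum_range_succ] at hs
  have hD : 0 < (1 + x ^ 2 / 5) ^ 2 - x ^ 2 := by nlinarith
  -- `(x³/3 + x⁵/5 + x⁷/7) · 3((1 + x²/5)² - x²) - x³ = x⁷ · (this polynomial)`
  have hQ : 0 < 19 / 175 - 204 / 875 * x ^ 2 + 3 / 175 * x ^ 4 := by nlinarith
  have : x ^ 3 / (3 * ((1 + x ^ 2 / 5) ^ 2 - x ^ 2)) < x ^ 3 / 3 + x ^ 5 / 5 + x ^ 7 / 7 := by
    rw [div_lt_iff₀ (by positivity)]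
    nlinarith [mul_pos (pow_pos h0 7) hQ]
  linarith

theorem Real.artanh_sub_self_le {x : ℝ} (h0 : 0 ≤ x) (h1 : x ≤ 1 / 3) :
    artanh x - x ≤ x ^ 3 / (3 * ((1 + 23 / 120 * x ^ 2) ^ 2 - x ^ 2)) := by
  have hs := artanh_le_sum_range_add h0 (by linarith) 3
  norm_num [sum_range_succ] at hs
  have hD : 0 < (1 + 23 / 120 * x ^ 2) ^ 2 - x ^ 2 := by nlinarith
  have hx2 : 0 < 1 - x ^ 2 := by nlinarith
  -- `x³/(3D) - (x³/3 + x⁵/5 + x⁷/(7(1 - x²))) = x⁵ P / (21 D (1 - x²))` with `D`, `P` as here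
  have hP : 0 ≤ 7 / 60 - 11287 / 14400 * x ^ 2 - 22937 / 36000 * x ^ 4 + 529 / 12000 * x ^ 6 := by
    nlinarith [pow_nonneg h0 4, pow_nonneg h0 6]
  have : x ^ 3 / 3 + x ^ 5 / 5 + x ^ 7 / 7 / (1 - x ^ 2) ≤
      x ^ 3 / (3 * ((1 + 23 / 120 * x ^ 2) ^ 2 - x ^ 2)) := by
    rw [show x ^ 3 / 3 + x ^ 5 / 5 + x ^ 7 / 7 / (1 - x ^ 2) =
        x ^ 3 * (7 * (1 - x ^ 2) * (1 / 3 + x ^ 2 / 5) + x ^ 4) / (7 * (1 - x ^ 2)) by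
      field_simp, div_le_div_iff₀ (by positivity) (by positivity)]
    nlinarith [mul_nonneg (pow_nonneg h0 5) hP]
  linarith

theorem le_of_forall_sub_succ_le_of_tendsto {α : Type*} [AddCommGroup α] [PartialOrder α]
    [IsOrderedAddMonoid α] [TopologicalSpace α] [OrderClosedTopology α] [ContinuousSub α]
    {u v : ℕ → α} {l : α} {n : ℕ} (hu : Tendsto u atTop (𝓝 l)) (hv : Tendsto v atTop (𝓝 l))
    (h : ∀ k, n ≤ k → u k - u (k + 1) ≤ v k - v (k + 1)) : u n ≤ v n := by
  have hanti : Antitone fun m => v (m + n) - u (m + n) := antitone_nat_of_succ_le fun m => by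
    have := h (m + n) (Nat.le_add_left n m)
    rw [Nat.add_right_comm]
    rw [sub_le_sub_iff] at this ⊢
    rwa [add_comm] at this
  have hlim : Tendsto (fun m => v (m + n) - u (m + n)) atTop (𝓝 0) := by
    have := (hv.sub hu).comp (tendsto_add_atTop_nat n)
    rwa [sub_self] at this
  simpa using hanti.le_of_tendsto hlim 0

noncomputable def harmonicRemainder (n : ℕ) : ℝ :=
  harmonic n - log √(n * (n + 1)) - eulerMascheroniConstant

noncomputable def lodgeBound (a : ℝ) (n : ℕ) : ℝ := 1 / (6 * n * (n + 1) + a)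

theorem harmonicRemainder_sub_succ {k : ℕ} (hk : k ≠ 0) :
    harmonicRemainder k - harmonicRemainder (k + 1) = artanh (1 / (k + 1)) - 1 / (k + 1) := by
  have hk0 : (0 : ℝ) < k := by positivity
  have hx1 : 1 / (k + 1 : ℝ) ≤ 1 := by rw [div_le_one (by positivity)]; linarith
  have hx : (1 + 1 / (k + 1 : ℝ)) / (1 - 1 / (k + 1)) = (k + 1 + 1) / k := by
    field_simp [hk0.ne']
    ring
  have hx0 : 0 < 1 / (k + 1 : ℝ) := by positivity
  rw [artanh_eq_half_log ⟨by linarith, hx1⟩, hx, log_div (by positivity) hk0.ne']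
  simp only [harmonicRemainder, harmonic_succ]
  push_cast
  rw [log_sqrt (by positivity), log_sqrt (by positivity), log_mul hk0.ne' (by positivity),
    log_mul (by positivity) (by positivity)]
  ring

theorem tendsto_harmonicRemainder : Tendsto harmonicRemainder atTop (𝓝 0) := by
  have hlim := ((tendsto_eulerMascheroniSeq.add tendsto_eulerMascheroniSeq').div_const 2).sub_const
    eulerMascheroniConstant
  rw [add_self_div_two, sub_self] at hlim
  refine hlim.congr' ?_
  filter_upwards [eventually_ne_atTop 0] with n hn
  have hn0 : (0 : ℝ) < n := by positivity
  simp only [harmonicRemainder, eulerMascheroniSeq, eulerMascheroniSeq', if_neg hn,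
    log_sqrt (by positivity : (0 : ℝ) ≤ n * (n + 1)),
    log_mul hn0.ne' (by positivity : (n : ℝ) + 1 ≠ 0)]
  ring

theorem lodgeBound_sub_succ {a : ℝ} (ha : 0 < a) (k : ℕ) :
    lodgeBound a k - lodgeBound a (k + 1) =
      (1 / (k + 1)) ^ 3 / (3 * ((1 + a / 6 * (1 / (k + 1)) ^ 2) ^ 2 - (1 / (k + 1)) ^ 2)) := by
  simp only [lodgeBound]
  push_cast
  have hx1 : 1 / (k + 1 : ℝ) ≤ 1 := by rw [div_le_one (by positivity)]; linarith
  have hD : 0 < (1 + a / 6 * (1 / (k + 1 : ℝ)) ^ 2) ^ 2 - (1 / (k + 1)) ^ 2 := by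
    rw [sq_sub_sq]
    have : 0 < a / 6 * (1 / (k + 1 : ℝ)) ^ 2 := by positivity
    have : 0 < 1 / (k + 1 : ℝ) := by positivity
    apply mul_pos <;> linarith
  rw [div_sub_div _ _ (by positivity) (by positivity), eq_div_iff (by positivity)]
  field_simp
  ring

theorem tendsto_lodgeBound (a : ℝ) : Tendsto (lodgeBound a) atTop (𝓝 0) := by
  refine tendsto_const_nhds.div_atTop (tendsto_atTop_add_const_right _ a ?_)
  have hn : Tendsto (fun n : ℕ => (n : ℝ)) atTop atTop := tendsto_natCast_atTop_atTop
  exact (hn.const_mul_atTop (by norm_num)).atTop_mul_atTop₀ (tendsto_atTop_add_const_right _ 1 hn)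

theorem lodgeBound_lt_lodgeBound {a b : ℝ} {n : ℕ} (ha : 0 < 6 * n * (n + 1) + a) (hab : a < b) :
    lodgeBound b n < lodgeBound a n :=
  one_div_lt_one_div_of_lt ha (by linarith)

theorem lodgeBound_sub_succ_lt {k : ℕ} (hk : k ≠ 0) :
    lodgeBound (6 / 5) k - lodgeBound (6 / 5) (k + 1) <
      harmonicRemainder k - harmonicRemainder (k + 1) := by
  have hk1 : (2 : ℝ) ≤ k + 1 := by
    have : (1 : ℝ) ≤ k := by exact_mod_cast Nat.one_le_iff_ne_zero.2 hk
    linarith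
  rw [lodgeBound_sub_succ (by norm_num), harmonicRemainder_sub_succ hk]
  convert lt_artanh_sub_self (x := 1 / (k + 1)) (by positivity) (by
    rw [div_le_div_iff₀ (by positivity) (by norm_num)]; linarith) using 4
  ring

theorem harmonicRemainder_sub_succ_le {k : ℕ} (hk : 2 ≤ k) :
    harmonicRemainder k - harmonicRemainder (k + 1) ≤
      lodgeBound (23 / 20) k - lodgeBound (23 / 20) (k + 1) := by
  have hk1 : (3 : ℝ) ≤ k + 1 := by
    have : (2 : ℝ) ≤ k := by exact_mod_cast hk
    linarith
  rw [lodgeBound_sub_succ (by norm_num), harmonicRemainder_sub_succ (by omega)]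
  convert artanh_sub_self_le (x := 1 / (k + 1)) (by positivity) (by
    rw [div_le_div_iff₀ (by positivity) (by norm_num)]; linarith) using 4
  ring

theorem lodgeBound_le_harmonicRemainder {n : ℕ} (hn : n ≠ 0) :
    lodgeBound (6 / 5) n ≤ harmonicRemainder n :=
  le_of_forall_sub_succ_le_of_tendsto (tendsto_lodgeBound _) tendsto_harmonicRemainder
    fun _ hk => (lodgeBound_sub_succ_lt (by omega)).le

theorem lodgeBound_lt_harmonicRemainder {n : ℕ} (hn : n ≠ 0) :
    lodgeBound (6 / 5) n < harmonicRemainder n := by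
  have := lodgeBound_sub_succ_lt hn
  have := lodgeBound_le_harmonicRemainder n.succ_ne_zero
  linarith

theorem harmonicRemainder_le_lodgeBound {n : ℕ} (hn : 2 ≤ n) :
    harmonicRemainder n ≤ lodgeBound (23 / 20) n :=
  le_of_forall_sub_succ_le_of_tendsto tendsto_harmonicRemainder (tendsto_lodgeBound _)
    fun _ hk => harmonicRemainder_sub_succ_le (hn.trans hk)

theorem lt_harmonicRemainder_one : 20 / 263 < harmonicRemainder 1 := by
  have hstep := harmonicRemainder_sub_succ one_ne_zero
  have hartanh := sum_range_le_artanh (x := 1 / 2) (by norm_num) (by norm_num) 5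
  have htwo := lodgeBound_le_harmonicRemainder two_ne_zero
  norm_num [sum_range_succ, lodgeBound] at hstep hartanh htwo
  linarith

theorem lodgeBound_one_div_sub_twelve (x : ℝ) : lodgeBound (1 / x - 12) 1 = x := by
  norm_num [lodgeBound]

theorem one_div_harmonicRemainder_one_sub_lt : 1 / harmonicRemainder 1 - 12 < 23 / 20 := by
  have h := lt_harmonicRemainder_one
  have : 1 / harmonicRemainder 1 < 263 / 20 := by
    rw [div_lt_iff₀ (by linarith)]
    linarith
  linarith

theorem harmonicRemainder_lt_lodgeBound {n : ℕ} (hn : 2 ≤ n) :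
    harmonicRemainder n < lodgeBound (1 / harmonicRemainder 1 - 12) n := by
  have hn2 : (2 : ℝ) ≤ n := by exact_mod_cast hn
  have : 0 < 1 / harmonicRemainder 1 := one_div_pos.2 (by linarith [lt_harmonicRemainder_one])
  refine (harmonicRemainder_le_lodgeBound hn).trans_lt (lodgeBound_lt_lodgeBound ?_
    one_div_harmonicRemainder_one_sub_lt)
  nlinarith

theorem ramanujan_lodge_sharp (n : ℕ) (hn : 1 ≤ n) :
    (1 / (6 * n * (n + 1) + 6 / 5) <
        (harmonic n : ℝ) - Real.log (Real.sqrt (n * (n + 1))) -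
          Real.eulerMascheroniConstant ∧
      (harmonic n : ℝ) - Real.log (Real.sqrt (n * (n + 1))) -
          Real.eulerMascheroniConstant ≤
        1 / (6 * n * (n + 1) +
          1 / (1 - Real.eulerMascheroniConstant - Real.log (Real.sqrt 2)) - 12)) ∧
    ((harmonic n : ℝ) - Real.log (Real.sqrt (n * (n + 1))) -
          Real.eulerMascheroniConstant =
        1 / (6 * n * (n + 1) +
          1 / (1 - Real.eulerMascheroniConstant - Real.log (Real.sqrt 2)) - 12) ↔
      n = 1) := by
  have hd1 : 1 - eulerMascheroniConstant - log √2 = harmonicRemainder 1 := by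
    norm_num [harmonicRemainder]
    ring
  simp only [add_sub_assoc, hd1]
  change (lodgeBound (6 / 5) n < harmonicRemainder n ∧
      harmonicRemainder n ≤ lodgeBound (1 / harmonicRemainder 1 - 12) n) ∧
    (harmonicRemainder n = lodgeBound (1 / harmonicRemainder 1 - 12) n ↔ n = 1)
  rcases hn.eq_or_lt with rfl | hn
  · rw [lodgeBound_one_div_sub_twelve]
    exact ⟨⟨lodgeBound_lt_harmonicRemainder one_ne_zero, le_rfl⟩, iff_of_true rfl rfl⟩
  · have hlt := harmonicRemainder_lt_lodgeBound hn
    exact ⟨⟨lodgeBound_lt_harmonicRemainder (by omega), hlt.le⟩, iff_of_false hlt.ne (by omega)⟩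
end

section
/- For every natural number n ≥ 1, define f_n by H_n = ln n + γ + 1/(2n + f_n). Then the sequence {f_n} is strictly monotonically decreasing. -/
/-!
Write `a n = H_n - log n - γ`, so that `f n = 1 / a n - 2 n` and `f (n + 1) < f n` amounts to
`a n - a (n + 1) < 2 a n a (n + 1)`. The difference `a n - a (n + 1) = log (1 + 1/n) - 1/(n + 1)`
is pinned down by the rapidly converging series `log (1 + 1/x) = 2 ∑ y^(2k+1) / (2k+1)`,
`y = 1 / (2x + 1)`: its partial sums are lower bounds, and a geometric tail gives upper bounds.

The comparison function `A x = 3 / (6x + 1) - 8 / (9 (4x + 1)^3) = 1/(2x) - 1/(12x²) + O(x⁻⁴)`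
follows the asymptotic expansion of `a n` closely enough that, with three terms of the series,
`A n - A (n + 1) ≤ a n - a (n + 1)`, which telescopes (both sequences tend to `0`) to `A n ≤ a n`,
and `a n - a (n + 1) < 2 A n A (n + 1) ≤ 2 a n a (n + 1)`. Both rational-function inequalities
become polynomials with positive coefficients after substituting `x = 1 + t`.
-/

open Real Filter Topology Finset

lemma le_of_sub_succ_le_of_tendsto {α : Type*} [AddCommGroup α] [PartialOrder α]
    [IsOrderedAddMonoid α] [TopologicalSpace α] [OrderClosedTopology α] [ContinuousSub α]
    {u v : ℕ → α} {l : α} {N : ℕ} (h : ∀ n ≥ N, u n - u (n + 1) ≤ v n - v (n + 1))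
    (hu : Tendsto u atTop (𝓝 l)) (hv : Tendsto v atTop (𝓝 l)) {n : ℕ} (hn : N ≤ n) :
    u n ≤ v n := by
  have hanti : Antitone fun k ↦ v (k + n) - u (k + n) :=
    antitone_nat_of_succ_le fun k ↦ by
      rw [add_right_comm, sub_le_sub_iff, add_comm]
      exact sub_le_sub_iff.mp (h (k + n) (by omega))
  have hlim : Tendsto (fun k ↦ v (k + n) - u (k + n)) atTop (𝓝 0) := by
    have := (hv.sub hu).comp (tendsto_add_atTop_nat n)
    rwa [sub_self] at this
  simpa using hanti.le_of_tendsto hlim 0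

noncomputable def logOneAddInvTerm (a : ℝ) (k : ℕ) : ℝ :=
  2 * (1 / (2 * k + 1)) * (1 / (2 * a + 1)) ^ (2 * k + 1)

lemma logOneAddInvTerm_nonneg {a : ℝ} (ha : 0 ≤ a) (k : ℕ) : 0 ≤ logOneAddInvTerm a k := by
  unfold logOneAddInvTerm
  positivity

lemma sum_logOneAddInvTerm_le_log {a : ℝ} (ha : 0 < a) (K : ℕ) :
    ∑ k ∈ range K, logOneAddInvTerm a k ≤ log (1 + a⁻¹) :=
  sum_le_hasSum _ (fun k _ ↦ logOneAddInvTerm_nonneg ha.le k) (hasSum_log_one_add_inv ha)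

lemma log_le_sum_logOneAddInvTerm_add {a : ℝ} (ha : 0 < a) (K : ℕ) :
    log (1 + a⁻¹) ≤ ∑ k ∈ range K, logOneAddInvTerm a k
      + logOneAddInvTerm a K / (1 - (1 / (2 * a + 1)) ^ 2) := by
  set y := 1 / (2 * a + 1) with hy
  have hy2 : y ^ 2 < 1 := by
    have : y < 1 := by rw [hy, div_lt_one (by positivity)]; linarith
    nlinarith [show 0 ≤ y by positivity]
  have htail : HasSum (fun k ↦ logOneAddInvTerm a (k + K))
      (log (1 + a⁻¹) - ∑ k ∈ range K, logOneAddInvTerm a k) :=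
    (hasSum_nat_add_iff' K).mpr (hasSum_log_one_add_inv ha)
  have hgeom := (hasSum_geometric_of_lt_one (sq_nonneg y) hy2).mul_left (logOneAddInvTerm a K)
  have hterm (k : ℕ) : logOneAddInvTerm a (k + K) ≤ logOneAddInvTerm a K * (y ^ 2) ^ k := by
    have hK : (1 : ℝ) / (2 * ↑(k + K) + 1) ≤ 1 / (2 * K + 1) := by
      gcongr
      exact_mod_cast Nat.le_add_left K k
    calc logOneAddInvTerm a (k + K)
        = 2 * (1 / (2 * ↑(k + K) + 1)) * (y ^ (2 * K + 1) * (y ^ 2) ^ k) := by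
          rw [logOneAddInvTerm, ← hy, ← pow_mul, ← pow_add]
          ring_nf
      _ ≤ logOneAddInvTerm a K * (y ^ 2) ^ k := by
          rw [logOneAddInvTerm, ← hy, mul_assoc _ (y ^ _)]
          gcongr
  have := hasSum_le hterm htail hgeom
  rw [div_eq_mul_inv]
  linarith

noncomputable def harmonicRemLower (x : ℝ) : ℝ :=
  3 / (6 * x + 1) - 8 / (9 * (4 * x + 1) ^ 3)

lemma harmonicRemLower_pos {x : ℝ} (hx : 0 ≤ x) : 0 < harmonicRemLower x := by
  rw [harmonicRemLower, sub_pos, div_lt_div_iff₀ (by positivity) (by positivity)]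
  nlinarith [pow_nonneg hx 3, sq_nonneg x]

lemma tendsto_harmonicRemLower : Tendsto harmonicRemLower atTop (𝓝 0) := by
  have h6 : Tendsto (fun x : ℝ ↦ 6 * x + 1) atTop atTop :=
    tendsto_atTop_add_const_right _ _ (tendsto_id.const_mul_atTop (by norm_num))
  have h4 : Tendsto (fun x : ℝ ↦ 9 * (4 * x + 1) ^ 3) atTop atTop :=
    ((tendsto_pow_atTop (by norm_num)).comp (tendsto_atTop_add_const_right _ _
      (tendsto_id.const_mul_atTop (by norm_num)))).const_mul_atTop (by norm_num)
  unfold harmonicRemLower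
  simpa using (tendsto_const_nhds.div_atTop h6).sub (tendsto_const_nhds.div_atTop h4)

lemma harmonicRemLower_sub_succ_le {x : ℝ} (hx : 1 ≤ x) :
    harmonicRemLower x - harmonicRemLower (x + 1)
      ≤ ∑ k ∈ range 3, logOneAddInvTerm x k - 1 / (x + 1) := by
  obtain ⟨t, ht, rfl⟩ : ∃ t, 0 ≤ t ∧ x = 1 + t := ⟨x - 1, by linarith, by ring⟩
  simp only [sum_range_succ, sum_range_zero, logOneAddInvTerm, harmonicRemLower]
  rw [← sub_nonneg]
  push_cast
  field_simp
  ring_nf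
  positivity

lemma sum_logOneAddInvTerm_add_sub_lt {x : ℝ} (hx : 1 ≤ x) :
    ∑ k ∈ range 3, logOneAddInvTerm x k + logOneAddInvTerm x 3 / (1 - (1 / (2 * x + 1)) ^ 2)
      - 1 / (x + 1) < 2 * harmonicRemLower x * harmonicRemLower (x + 1) := by
  obtain ⟨t, ht, rfl⟩ : ∃ t, 0 ≤ t ∧ x = 1 + t := ⟨x - 1, by linarith, by ring⟩
  simp only [sum_range_succ, sum_range_zero, logOneAddInvTerm, harmonicRemLower]
  rw [← sub_pos]
  push_cast
  have : (2 * (1 + t) + 1) ^ 2 - 1 ≠ 0 := by nlinarith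
  field_simp
  ring_nf
  positivity

noncomputable def harmonicRem (n : ℕ) : ℝ :=
  harmonic n - log n - eulerMascheroniConstant

lemma tendsto_harmonicRem : Tendsto harmonicRem atTop (𝓝 0) := by
  have := tendsto_harmonic_sub_log.sub_const eulerMascheroniConstant
  rwa [sub_self] at this

lemma harmonicRem_sub_succ {n : ℕ} (hn : n ≠ 0) :
    harmonicRem n - harmonicRem (n + 1) = log (1 + (n : ℝ)⁻¹) - 1 / (n + 1) := by
  have hn' : (n : ℝ) ≠ 0 := by exact_mod_cast hn
  rw [show 1 + (n : ℝ)⁻¹ = (n + 1) / n by field_simp, log_div (by positivity) hn',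
    harmonicRem, harmonicRem, harmonic_succ]
  push_cast
  ring

lemma harmonicRemLower_le {n : ℕ} (hn : n ≠ 0) : harmonicRemLower n ≤ harmonicRem n := by
  refine le_of_sub_succ_le_of_tendsto (N := 1) (fun m hm ↦ ?_)
    (tendsto_harmonicRemLower.comp tendsto_natCast_atTop_atTop) tendsto_harmonicRem
    (Nat.one_le_iff_ne_zero.mpr hn)
  have hm' : (1 : ℝ) ≤ m := by exact_mod_cast hm
  simp only [Function.comp_apply, Nat.cast_add_one]
  rw [harmonicRem_sub_succ (by omega)]
  linarith [harmonicRemLower_sub_succ_le hm',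
    sum_logOneAddInvTerm_le_log (by positivity : (0 : ℝ) < m) 3]

lemma harmonicRem_sub_succ_lt {n : ℕ} (hn : n ≠ 0) :
    harmonicRem n - harmonicRem (n + 1) < 2 * harmonicRem n * harmonicRem (n + 1) := by
  have hn' : (1 : ℝ) ≤ n := by exact_mod_cast Nat.one_le_iff_ne_zero.mpr hn
  have hL := harmonicRemLower_le hn
  have hL₁ : harmonicRemLower (n + 1) ≤ harmonicRem (n + 1) := by
    exact_mod_cast harmonicRemLower_le n.succ_ne_zero
  have hpos := harmonicRemLower_pos (x := n) (by positivity)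
  have hpos₁ := harmonicRemLower_pos (x := n + 1) (by positivity)
  calc harmonicRem n - harmonicRem (n + 1) = log (1 + (n : ℝ)⁻¹) - 1 / (n + 1) :=
        harmonicRem_sub_succ hn
    _ ≤ ∑ k ∈ range 3, logOneAddInvTerm n k
          + logOneAddInvTerm n 3 / (1 - (1 / (2 * n + 1)) ^ 2) - 1 / (n + 1) := by
        gcongr
        exact log_le_sum_logOneAddInvTerm_add (by positivity) 3
    _ < 2 * harmonicRemLower n * harmonicRemLower (n + 1) := sum_logOneAddInvTerm_add_sub_lt hn'
    _ ≤ 2 * harmonicRem n * harmonicRem (n + 1) := by gcongr; linarith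

lemma one_div_harmonicRem_succ_sub_lt {n : ℕ} (hn : n ≠ 0) :
    1 / harmonicRem (n + 1) - 1 / harmonicRem n < 2 := by
  have hpos : 0 < harmonicRem n :=
    (harmonicRemLower_pos (by positivity)).trans_le (harmonicRemLower_le hn)
  have hpos₁ : 0 < harmonicRem (n + 1) :=
    (harmonicRemLower_pos (by positivity)).trans_le (harmonicRemLower_le n.succ_ne_zero)
  rw [div_sub_div _ _ hpos₁.ne' hpos.ne', div_lt_iff₀ (by positivity)]
  linarith [harmonicRem_sub_succ_lt hn]

theorem f_strictAnti :
    StrictAntiOn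
      (fun n : ℕ =>
        1 / ((harmonic n : ℝ) - Real.log n - Real.eulerMascheroniConstant) - 2 * n)
      (Set.Ici 1) := by
  refine strictAntiOn_of_add_one_lt Set.ordConnected_Ici fun n _ hn _ ↦ ?_
  have := one_div_harmonicRem_succ_sub_lt (n := n) (by simpa [Nat.one_le_iff_ne_zero] using hn)
  simp only [harmonicRem] at this
  push_cast at this ⊢
  linarith
end

section
/- For every natural number n ≥ 1, let λ_n := 1/(H_n − ln(√(n(n+1))) − γ) − 6n(n+1). Then λ_n converges to 6/5 as n → ∞. -/
open Real Filter Topology Finset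

/-!
Write `D n = H_n - log √(n(n+1)) - γ` and `g t = 1 / (6t(t+1) + 6/5)`. Both tend to `0`, so an
inequality between the successive differences of two such sequences telescopes into an inequality
between the sequences themselves. Here `D n - D (n+1) = artanh x - x` with `x = 1/(n+1)`, which
truncations of the series of `artanh` squeeze between `g n - g (n+1)` and
`g n - g (n+1) + e n - e (n+1)` with `e t = 1 / (30 t^6)`. Hence `g n ≤ D n ≤ g n + e n`, which
gives `6n(n+1) + 6/5 - 7/n² ≤ 1 / D n ≤ 6n(n+1) + 6/5`.
-/

theorem le_of_tendsto_of_sub_succ_le {α : Type*} [AddCommGroup α] [PartialOrder α]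
    [IsOrderedAddMonoid α] [TopologicalSpace α] [OrderClosedTopology α] [ContinuousSub α]
    {a b : ℕ → α} {l : α} {N : ℕ}
    (ha : Tendsto a atTop (𝓝 l)) (hb : Tendsto b atTop (𝓝 l))
    (h : ∀ n ≥ N, a n - a (n + 1) ≤ b n - b (n + 1)) {n : ℕ} (hn : N ≤ n) :
    a n ≤ b n := by
  have hdecr : ∀ m ≥ n, b m - a m ≤ b n - a n := by
    intro m hm
    induction m, hm using Nat.le_induction with
    | base => exact le_rfl
    | succ m hm ih =>
      refine le_trans ?_ ih
      have := h m (hn.trans hm)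
      rw [sub_le_sub_iff] at this ⊢
      rwa [add_comm]
  have hlim : Tendsto (fun m => b m - a m) atTop (𝓝 0) := by simpa using hb.sub ha
  simpa using le_of_tendsto hlim (eventually_atTop.2 ⟨n, hdecr⟩)

theorem le_log_one_add_sub_log_one_sub {x : ℝ} (hx0 : 0 ≤ x) (hx1 : x < 1) :
    2 * (x + x ^ 3 / 3 + x ^ 5 / 5 + x ^ 7 / 7) ≤ log (1 + x) - log (1 - x) := by
  have hs := hasSum_log_sub_log_of_abs_lt_one (x := x) (by rwa [abs_of_nonneg hx0])
  have := sum_le_hasSum (range 4) (fun k _ => by positivity) hs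
  norm_num [sum_range_succ] at this
  linarith

theorem log_one_add_sub_log_one_sub_le {x : ℝ} (hx0 : 0 ≤ x) (hx1 : x < 1) :
    log (1 + x) - log (1 - x) ≤
      2 * (x + x ^ 3 / 3 + x ^ 5 / 5 + x ^ 7 / 7 + x ^ 9 / (1 - x)) := by
  have hpos := abs_log_sub_add_sum_range_le (x := x) (by rwa [abs_of_nonneg hx0]) 8
  have hneg := abs_log_sub_add_sum_range_le (x := -x) (by rwa [abs_neg, abs_of_nonneg hx0]) 8
  rw [abs_of_nonneg hx0] at hpos
  rw [abs_neg, abs_of_nonneg hx0, sub_neg_eq_add] at hneg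
  norm_num [sum_range_succ, Odd.neg_pow, Even.neg_pow] at hpos hneg
  linarith [(abs_le.1 hpos).1, (abs_le.1 hneg).2]

noncomputable def harmonicGap (n : ℕ) : ℝ :=
  harmonic n - log √(n * (n + 1)) - eulerMascheroniConstant

theorem harmonicGap_eq {n : ℕ} (hn : n ≠ 0) :
    harmonicGap n = harmonic n - (log n + log (n + 1)) / 2 - eulerMascheroniConstant := by
  have hn' : (0 : ℝ) < n := by positivity
  rw [harmonicGap, log_sqrt (by positivity), log_mul hn'.ne' (by positivity)]

theorem tendsto_harmonicGap : Tendsto harmonicGap atTop (𝓝 0) := by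
  have h := ((tendsto_harmonic_sub_log.add tendsto_harmonic_sub_log_add_one).div_const 2).sub_const
    eulerMascheroniConstant
  rw [add_self_div_two, sub_self] at h
  refine h.congr' ?_
  filter_upwards [eventually_ne_atTop 0] with n hn
  rw [harmonicGap_eq hn]
  ring

theorem harmonicGap_sub_succ {n : ℕ} (hn : n ≠ 0) :
    harmonicGap n - harmonicGap (n + 1) =
      (log (1 + ((n : ℝ) + 1)⁻¹) - log (1 - ((n : ℝ) + 1)⁻¹)) / 2 -
        ((n : ℝ) + 1)⁻¹ := by
  have hn' : (0 : ℝ) < n := by positivity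
  have hplus : 1 + ((n : ℝ) + 1)⁻¹ = (n + 2) / (n + 1) := by field_simp; ring
  have hminus : 1 - ((n : ℝ) + 1)⁻¹ = n / (n + 1) := by field_simp; ring
  rw [harmonicGap_eq hn, harmonicGap_eq n.succ_ne_zero, harmonic_succ, hplus, hminus,
    log_div (by positivity) (by positivity), log_div hn'.ne' (by positivity)]
  push_cast
  ring_nf

noncomputable def gapApprox (t : ℝ) : ℝ := (6 * t * (t + 1) + 6 / 5)⁻¹

theorem gapApprox_sub_succ_le {t : ℝ} (ht : 1 ≤ t) :
    gapApprox t - gapApprox (t + 1) ≤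
      (t + 1)⁻¹ ^ 3 / 3 + (t + 1)⁻¹ ^ 5 / 5 + (t + 1)⁻¹ ^ 7 / 7 := by
  -- After the shift `t = s + 1` the numerator of the difference has nonnegative coefficients;
  -- the same holds in the next two lemmas.
  obtain ⟨s, hs, rfl⟩ : ∃ s ≥ 0, t = s + 1 := ⟨t - 1, by linarith, by ring⟩
  unfold gapApprox
  rw [← sub_nonneg]
  field_simp
  ring_nf
  positivity

theorem le_gapApprox_sub_succ_add {t : ℝ} (ht : 1 ≤ t) :
    (t + 1)⁻¹ ^ 3 / 3 + (t + 1)⁻¹ ^ 5 / 5 + (t + 1)⁻¹ ^ 7 / 7 +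
        (t + 1)⁻¹ ^ 9 / (1 - (t + 1)⁻¹) ≤
      gapApprox t - gapApprox (t + 1) + ((30 * t ^ 6)⁻¹ - (30 * (t + 1) ^ 6)⁻¹) := by
  obtain ⟨s, hs, rfl⟩ : ∃ s ≥ 0, t = s + 1 := ⟨t - 1, by linarith, by ring⟩
  rw [show 1 - (s + 1 + 1)⁻¹ = (s + 1) / (s + 1 + 1) by field_simp; ring]
  unfold gapApprox
  rw [← sub_nonneg]
  field_simp
  ring_nf
  positivity

theorem sub_le_inv_gapApprox_add {t : ℝ} (ht : 1 ≤ t) :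
    6 * t * (t + 1) + 6 / 5 - 7 / t ^ 2 ≤ (gapApprox t + (30 * t ^ 6)⁻¹)⁻¹ := by
  obtain ⟨s, hs, rfl⟩ : ∃ s ≥ 0, t = s + 1 := ⟨t - 1, by linarith, by ring⟩
  unfold gapApprox
  rw [← sub_nonneg]
  field_simp
  ring_nf
  positivity

theorem tendsto_gapApprox : Tendsto gapApprox atTop (𝓝 0) := by
  refine tendsto_inv_atTop_zero.comp (tendsto_atTop_mono' _ ?_ tendsto_id)
  filter_upwards [eventually_ge_atTop 0] with t ht
  dsimp only [id]
  nlinarith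

theorem gapApprox_le_harmonicGap {n : ℕ} (hn : n ≠ 0) : gapApprox n ≤ harmonicGap n := by
  refine le_of_tendsto_of_sub_succ_le (N := 1) (a := fun n : ℕ => gapApprox n)
    (tendsto_gapApprox.comp tendsto_natCast_atTop_atTop) tendsto_harmonicGap
    (fun m hm => ?_) (Nat.one_le_iff_ne_zero.2 hn)
  have hm' : (1 : ℝ) ≤ m := by exact_mod_cast hm
  have hx : ((m : ℝ) + 1)⁻¹ < 1 := inv_lt_one_of_one_lt₀ (by linarith)
  have hlog := le_log_one_add_sub_log_one_sub (by positivity) hx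
  have happrox := gapApprox_sub_succ_le hm'
  simp only [Nat.cast_succ, harmonicGap_sub_succ (Nat.one_le_iff_ne_zero.1 hm)]
  linarith

theorem harmonicGap_le {n : ℕ} (hn : n ≠ 0) :
    harmonicGap n ≤ gapApprox n + (30 * (n : ℝ) ^ 6)⁻¹ := by
  refine le_of_tendsto_of_sub_succ_le (N := 1)
    (b := fun n : ℕ => gapApprox n + (30 * (n : ℝ) ^ 6)⁻¹)
    tendsto_harmonicGap ?_ (fun m hm => ?_) (Nat.one_le_iff_ne_zero.2 hn)
  · have herror : Tendsto (fun t : ℝ => (30 * t ^ 6)⁻¹) atTop (𝓝 0) :=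
      ((tendsto_pow_atTop (by norm_num)).const_mul_atTop (by norm_num)).inv_tendsto_atTop
    simpa only [add_zero, Function.comp_def] using
      (tendsto_gapApprox.add herror).comp tendsto_natCast_atTop_atTop
  have hm' : (1 : ℝ) ≤ m := by exact_mod_cast hm
  have hx : ((m : ℝ) + 1)⁻¹ < 1 := inv_lt_one_of_one_lt₀ (by linarith)
  have hlog := log_one_add_sub_log_one_sub_le (by positivity) hx
  have happrox := le_gapApprox_sub_succ_add hm'
  simp only [Nat.cast_succ, harmonicGap_sub_succ (Nat.one_le_iff_ne_zero.1 hm)]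
  linarith

theorem inv_harmonicGap_le {n : ℕ} (hn : n ≠ 0) :
    (harmonicGap n)⁻¹ ≤ 6 * n * (n + 1) + 6 / 5 := by
  have hpos : 0 < gapApprox n := inv_pos.2 (by positivity)
  simpa [gapApprox] using inv_anti₀ hpos (gapApprox_le_harmonicGap hn)

theorem le_inv_harmonicGap {n : ℕ} (hn : n ≠ 0) :
    6 * n * (n + 1) + 6 / 5 - 7 / (n : ℝ) ^ 2 ≤ (harmonicGap n)⁻¹ := by
  have hpos : 0 < harmonicGap n :=
    (inv_pos.2 (by positivity)).trans_le (gapApprox_le_harmonicGap hn)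
  exact (sub_le_inv_gapApprox_add (by exact_mod_cast Nat.one_le_iff_ne_zero.2 hn)).trans
    (inv_anti₀ hpos (harmonicGap_le hn))

theorem lambda_tendsto :
    Filter.Tendsto
      (fun n : ℕ =>
        1 / ((harmonic n : ℝ) - Real.log (Real.sqrt (n * (n + 1))) -
            Real.eulerMascheroniConstant) - 6 * n * (n + 1))
      Filter.atTop (nhds (6 / 5)) := by
  change Tendsto (fun n : ℕ => 1 / harmonicGap n - 6 * n * (n + 1)) atTop (𝓝 (6 / 5))
  have hlower : Tendsto (fun n : ℕ => 6 / 5 - 7 / (n : ℝ) ^ 2) atTop (𝓝 (6 / 5)) := by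
    simpa using tendsto_const_nhds.sub
      (tendsto_const_nhds.div_atTop
        ((tendsto_pow_atTop two_ne_zero).comp (tendsto_natCast_atTop_atTop (R := ℝ))))
  refine tendsto_of_tendsto_of_tendsto_of_le_of_le' hlower tendsto_const_nhds ?_ ?_
  · filter_upwards [eventually_ne_atTop 0] with n hn
    linarith [le_inv_harmonicGap hn, one_div (harmonicGap n)]
  · filter_upwards [eventually_ne_atTop 0] with n hn
    linarith [inv_harmonicGap_le hn, one_div (harmonicGap n)]
end

section
/- For every real x > 0 there exists Θ_x with 0 < Θ_x < 1 such that Ψ'(x+1) = 1/x − 1/(2x^2) + 1/(6x^3) − 1/(30x^5) + 1/(42x^7) − Θ_x/(30x^9), where Ψ is the digamma function. -/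
/-!
Euler's limit formula for `Γ` writes `log Γ(y) + log y` as a series whose terms have second
derivatives `1/(y+k+1)²`; differentiating twice under the sum gives `Ψ'(y) = ∑_{k ≥ 0} 1/(y+k)²`.
Let `A_c(t)` be the right-hand side of the expansion with `Θ = c`. Clearing denominators gives
`A_1(t) - A_1(t+1) < 1/(t+1)² < A_0(t) - A_0(t+1)` for `t > 0`, and summing over `t = x + k`
telescopes (as `A_c(t) → 0`) to `A_1(x) < Ψ'(x+1) < A_0(x)`. Since `A_c(x)` is affine in `c`,
the intermediate value theorem provides `Θ`.
-/

open Real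

/-- The digamma function `Ψ(x) = Γ'(x)/Γ(x) = (log ∘ Γ)'(x)`. -/
noncomputable def digamma (x : ℝ) : ℝ := deriv (fun y : ℝ => Real.log (Real.Gamma y)) x

open Filter Topology Finset

theorem hasSum_lt_of_forall_lt_sub_succ {a g : ℕ → ℝ} {s : ℝ} (ha : HasSum a s)
    (hg : Tendsto g atTop (𝓝 0)) (h : ∀ k, a k < g k - g (k + 1)) : s < g 0 := by
  have hgap : HasSum (fun k => g k - g (k + 1) - a k) (g 0 - s) := by
    refine (hasSum_iff_tendsto_nat_of_nonneg (fun k => (sub_pos.2 (h k)).le) _).2 ?_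
    have hpartial (N : ℕ) : ∑ k ∈ range N, (g k - g (k + 1) - a k) =
        g 0 - g N - ∑ k ∈ range N, a k := by
      rw [sum_sub_distrib, sum_range_sub']
    simp only [hpartial]
    simpa using (tendsto_const_nhds (x := g 0)).sub hg |>.sub ha.tendsto_sum_nat
  have := hasSum_lt (f := fun _ => 0) (i := 0) (fun k => (sub_pos.2 (h k)).le)
    (sub_pos.2 (h 0)) hasSum_zero hgap
  linarith

theorem lt_hasSum_of_forall_sub_succ_lt {a g : ℕ → ℝ} {s : ℝ} (ha : HasSum a s)
    (hg : Tendsto g atTop (𝓝 0)) (h : ∀ k, g k - g (k + 1) < a k) : g 0 < s := by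
  have := hasSum_lt_of_forall_lt_sub_succ ha.neg (by simpa using hg.neg)
    (fun k => by linarith [h k])
  linarith

-- The logarithm of the `k`-th factor `(1 + 1/(k+1))^y / (1 + y/(k+1))` of Euler's product
-- for `y Γ(y)`.
noncomputable def logGammaTerm (k : ℕ) (y : ℝ) : ℝ :=
  y * (log (k + 2) - log (k + 1)) - (log (y + k + 1) - log (k + 1))

noncomputable def digammaTerm (k : ℕ) (y : ℝ) : ℝ :=
  log (k + 2) - log (k + 1) - (y + k + 1)⁻¹

theorem logGammaTerm_one (k : ℕ) : logGammaTerm k 1 = 0 := by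
  rw [logGammaTerm, one_mul, add_comm (1 : ℝ), add_assoc, one_add_one_eq_two, sub_self]

theorem hasDerivAt_logGammaTerm (k : ℕ) {y : ℝ} (hy : y + k + 1 ≠ 0) :
    HasDerivAt (logGammaTerm k) (digammaTerm k y) y := by
  have hlog : HasDerivAt (fun z : ℝ => log (z + k + 1)) (y + k + 1)⁻¹ y := by
    simpa using (((hasDerivAt_id y).add_const (k : ℝ)).add_const 1).log hy
  exact (((hasDerivAt_id' y).mul_const (log (k + 2) - log (k + 1))).sub
    (hlog.sub_const (log (k + 1)))).congr_deriv (by rw [one_mul, digammaTerm])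

theorem hasDerivAt_digammaTerm (k : ℕ) {y : ℝ} (hy : y + k + 1 ≠ 0) :
    HasDerivAt (digammaTerm k) ((y + k + 1) ^ 2)⁻¹ y := by
  have hinv : HasDerivAt (fun z : ℝ => (z + k + 1)⁻¹) (-1 / (y + k + 1) ^ 2) y := by
    simpa using (((hasDerivAt_id' y).add_const (k : ℝ)).add_const 1).fun_inv hy
  exact (hinv.const_sub (log (k + 2) - log (k + 1))).congr_deriv (by ring)

theorem log_add_one_sub_log_mem_Icc {u : ℝ} (hu : 0 < u) :
    log (u + 1) - log u ∈ Set.Icc (u + 1)⁻¹ u⁻¹ := by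
  rw [← log_div (by positivity) hu.ne']
  constructor
  · calc (u + 1)⁻¹ = 1 - ((u + 1) / u)⁻¹ := by field_simp; ring
      _ ≤ log ((u + 1) / u) := one_sub_inv_le_log_of_pos (by positivity)
  · calc log ((u + 1) / u) ≤ (u + 1) / u - 1 := log_le_sub_one_of_pos (by positivity)
      _ = u⁻¹ := by field_simp; ring

theorem abs_digammaTerm_le (k : ℕ) {y : ℝ} (hy : 0 ≤ y) :
    |digammaTerm k y| ≤ (1 + y) / (k + 1) ^ 2 := by
  obtain ⟨hlo, hhi⟩ := log_add_one_sub_log_mem_Icc (u := (k : ℝ) + 1) (by positivity)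
  rw [add_assoc, one_add_one_eq_two] at hlo hhi
  have hupper : ((k : ℝ) + 1)⁻¹ - (y + k + 1)⁻¹ ≤ y / (k + 1) ^ 2 := by
    rw [div_eq_mul_inv]
    field_simp
    nlinarith
  have hlower : (y + k + 1)⁻¹ - ((k : ℝ) + 2)⁻¹ ≤ 1 / (k + 1) ^ 2 := by
    field_simp
    nlinarith
  have hy1 : y / ((k : ℝ) + 1) ^ 2 ≤ (1 + y) / (k + 1) ^ 2 := by gcongr; linarith
  have h1y : 1 / ((k : ℝ) + 1) ^ 2 ≤ (1 + y) / (k + 1) ^ 2 := by gcongr; linarith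
  rw [digammaTerm, abs_le]
  constructor <;> linarith

theorem summable_div_add_one_sq (c : ℝ) : Summable fun k : ℕ => c / ((k : ℝ) + 1) ^ 2 := by
  have := (summable_nat_add_iff 1).2 (Real.summable_one_div_nat_pow.2 one_lt_two)
  simpa [div_eq_mul_inv] using this.mul_left c

theorem norm_digammaTerm_le_of_mem_Ioo (k : ℕ) {y B : ℝ} (hy : y ∈ Set.Ioo 0 B) :
    ‖digammaTerm k y‖ ≤ (1 + B) / (k + 1) ^ 2 :=
  (abs_digammaTerm_le k hy.1.le).trans (by gcongr; exact hy.2.le)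

theorem hasDerivAt_tsum_logGammaTerm {y : ℝ} (hy : 0 < y) :
    HasDerivAt (fun z => ∑' k, logGammaTerm k z) (∑' k, digammaTerm k y) y := by
  refine hasDerivAt_tsum_of_isPreconnected (summable_div_add_one_sq (1 + (y + 2))) isOpen_Ioo
    isPreconnected_Ioo (fun k z hz => hasDerivAt_logGammaTerm k (by linarith [hz.1]))
    (fun k z hz => norm_digammaTerm_le_of_mem_Ioo k hz) (y₀ := 1) ⟨one_pos, by linarith⟩ ?_
    ⟨hy, by linarith⟩
  simp [logGammaTerm_one]

theorem sum_range_logGammaTerm (y : ℝ) (N : ℕ) :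
    ∑ k ∈ range N, logGammaTerm k y =
      BohrMollerup.logGammaSeq y N + log y + y * (log (N + 1) - log N) := by
  induction N with
  | zero => simp [BohrMollerup.logGammaSeq]
  | succ N ih =>
    rw [sum_range_succ, ih]
    simp only [BohrMollerup.logGammaSeq, sum_range_succ _ (N + 1), Nat.factorial_succ,
      Nat.cast_mul, Nat.cast_succ]
    rw [log_mul (by positivity) (by positivity), logGammaTerm]
    ring_nf

theorem summable_logGammaTerm {y : ℝ} (hy : 0 < y) : Summable (logGammaTerm · y) :=
  summable_of_summable_hasDerivAt_of_isPreconnected (summable_div_add_one_sq (1 + (y + 2)))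
    isOpen_Ioo isPreconnected_Ioo
    (fun k z hz => hasDerivAt_logGammaTerm k (by linarith [hz.1]))
    (fun k z hz => norm_digammaTerm_le_of_mem_Ioo k hz) (y₀ := 1) ⟨one_pos, by linarith⟩
    (by simp [logGammaTerm_one]) ⟨hy, by linarith⟩

theorem hasSum_logGammaTerm {y : ℝ} (hy : 0 < y) :
    HasSum (logGammaTerm · y) (log (Gamma y) + log y) := by
  rw [(summable_logGammaTerm hy).hasSum_iff_tendsto_nat, funext (sum_range_logGammaTerm y)]
  simpa using ((BohrMollerup.tendsto_log_gamma hy).add_const (log y)).add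
    (tendsto_log_nat_add_one_sub_log.const_mul y)

theorem digamma_eq_tsum {y : ℝ} (hy : 0 < y) : digamma y = -y⁻¹ + ∑' k, digammaTerm k y := by
  have hlogGamma : (fun z => log (Gamma z)) =ᶠ[𝓝 y] fun z => -log z + ∑' k, logGammaTerm k z := by
    filter_upwards [Ioi_mem_nhds hy] with z hz
    rw [(hasSum_logGammaTerm hz).tsum_eq]
    ring
  rw [digamma, hlogGamma.deriv_eq]
  exact ((hasDerivAt_log hy.ne').neg.add (hasDerivAt_tsum_logGammaTerm hy)).deriv

theorem hasDerivAt_digamma {y : ℝ} (hy : 0 < y) :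
    HasDerivAt digamma ((y ^ 2)⁻¹ + ∑' k : ℕ, ((y + k + 1) ^ 2)⁻¹) y := by
  have htsum : HasDerivAt (fun z => ∑' k, digammaTerm k z) (∑' k : ℕ, ((y + k + 1) ^ 2)⁻¹) y := by
    refine hasDerivAt_tsum_of_isPreconnected (summable_div_add_one_sq 1) isOpen_Ioi
      isPreconnected_Ioi (fun k z hz => hasDerivAt_digammaTerm k (by linarith [hz.out]))
      (fun k z hz => ?_) hy ?_ hy
    · have hz : (0 : ℝ) < z := hz
      rw [norm_inv, norm_pow, Real.norm_of_nonneg (by positivity), ← one_div]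
      gcongr
      linarith
    · exact .of_norm_bounded (summable_div_add_one_sq (1 + y)) (abs_digammaTerm_le · hy.le)
  refine (((hasDerivAt_inv hy.ne').neg.add htsum).congr_deriv (by ring)).congr_of_eventuallyEq ?_
  filter_upwards [Ioi_mem_nhds hy] with z hz using digamma_eq_tsum hz

theorem hasSum_deriv_digamma {y : ℝ} (hy : 0 < y) :
    HasSum (fun k : ℕ => ((y + k) ^ 2)⁻¹) (deriv digamma y) := by
  have hsummable : Summable fun k : ℕ => ((y + (k + 1)) ^ 2)⁻¹ :=
    (summable_div_add_one_sq 1).of_nonneg_of_le (fun _ => by positivity) fun k => by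
      rw [← one_div]; exact one_div_le_one_div_of_le (by positivity)
        (pow_le_pow_left₀ (by positivity) (by linarith) 2)
  rw [(hasDerivAt_digamma hy).deriv, ← hasSum_nat_add_iff' 1]
  simpa [add_assoc] using hsummable.hasSum
noncomputable def trigammaApprox (c t : ℝ) : ℝ :=
  1 / t - 1 / (2 * t ^ 2) + 1 / (6 * t ^ 3) - 1 / (30 * t ^ 5) + 1 / (42 * t ^ 7) -
    c / (30 * t ^ 9)

theorem tendsto_trigammaApprox_atTop (c : ℝ) : Tendsto (trigammaApprox c) atTop (𝓝 0) := by
  have h (a : ℝ) {b : ℝ} (hb : 0 < b) {n : ℕ} (hn : n ≠ 0) :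
      Tendsto (fun t : ℝ => a / (b * t ^ n)) atTop (𝓝 0) :=
    tendsto_const_nhds.div_atTop ((tendsto_pow_atTop hn).const_mul_atTop hb)
  have := (((((h 1 one_pos one_ne_zero).sub (h 1 two_pos two_ne_zero)).add
    (h 1 (b := 6) (by norm_num) (n := 3) (by norm_num))).sub
    (h 1 (b := 30) (by norm_num) (n := 5) (by norm_num))).add
    (h 1 (b := 42) (by norm_num) (n := 7) (by norm_num))).sub
    (h c (b := 30) (by norm_num) (n := 9) (by norm_num))
  convert this using 1
  · funext t; simp [trigammaApprox]
  · norm_num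

theorem inv_add_one_sq_lt_trigammaApprox_zero_sub {t : ℝ} (ht : 0 < t) :
    ((t + 1) ^ 2)⁻¹ < trigammaApprox 0 t - trigammaApprox 0 (t + 1) := by
  have hid : trigammaApprox 0 t - trigammaApprox 0 (t + 1) - ((t + 1) ^ 2)⁻¹ =
      (5 * t ^ 2 + 45 * t ^ 3 + 173 * t ^ 4 + 357 * t ^ 5 + 413 * t ^ 6 + 252 * t ^ 7 +
        63 * t ^ 8) / (210 * t ^ 9 * (t + 1) ^ 9) := by
    unfold trigammaApprox
    field_simp
    ring
  have : 0 < trigammaApprox 0 t - trigammaApprox 0 (t + 1) - ((t + 1) ^ 2)⁻¹ := by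
    rw [hid]; positivity
  linarith

theorem trigammaApprox_one_sub_lt_inv_add_one_sq {t : ℝ} (ht : 0 < t) :
    trigammaApprox 1 t - trigammaApprox 1 (t + 1) < ((t + 1) ^ 2)⁻¹ := by
  have hid : ((t + 1) ^ 2)⁻¹ - (trigammaApprox 1 t - trigammaApprox 1 (t + 1)) =
      (7 + 63 * t + 247 * t ^ 2 + 543 * t ^ 3 + 709 * t ^ 4 + 525 * t ^ 5 + 175 * t ^ 6) /
        (210 * t ^ 9 * (t + 1) ^ 9) := by
    unfold trigammaApprox
    field_simp
    ring
  have : 0 < ((t + 1) ^ 2)⁻¹ - (trigammaApprox 1 t - trigammaApprox 1 (t + 1)) := by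
    rw [hid]; positivity
  linarith

theorem trigamma_expansion (x : ℝ) (hx : 0 < x) :
    ∃ Θ : ℝ, 0 < Θ ∧ Θ < 1 ∧
      deriv digamma (x + 1) =
        1 / x - 1 / (2 * x ^ 2) + 1 / (6 * x ^ 3) - 1 / (30 * x ^ 5) +
          1 / (42 * x ^ 7) - Θ / (30 * x ^ 9) := by
  have hsum : HasSum (fun k : ℕ => ((x + k + 1) ^ 2)⁻¹) (deriv digamma (x + 1)) := by
    simpa only [add_right_comm] using hasSum_deriv_digamma (by linarith : 0 < x + 1)
  have htendsto (c : ℝ) : Tendsto (fun k : ℕ => trigammaApprox c (x + k)) atTop (𝓝 0) :=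
    (tendsto_trigammaApprox_atTop c).comp
      (tendsto_atTop_add_const_left _ x tendsto_natCast_atTop_atTop)
  have hupper := hasSum_lt_of_forall_lt_sub_succ hsum (htendsto 0) fun k => by
    simpa [add_assoc] using inv_add_one_sq_lt_trigammaApprox_zero_sub (t := x + k) (by positivity)
  have hlower := lt_hasSum_of_forall_sub_succ_lt hsum (htendsto 1) fun k => by
    simpa [add_assoc] using trigammaApprox_one_sub_lt_inv_add_one_sq (t := x + k) (by positivity)
  have hcont : ContinuousOn (trigammaApprox · x) (Set.Icc 0 1) := by
    unfold trigammaApprox; fun_prop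
  obtain ⟨Θ, ⟨hΘ0, hΘ1⟩, hΘ⟩ := intermediate_value_Ioo' zero_le_one hcont
    ⟨by simpa using hlower, by simpa using hupper⟩
  exact ⟨Θ, hΘ0, hΘ1, hΘ.symm⟩
end
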